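/- For p ∈ {0,1} and every integer n ≥ 1, the alternating sum ∑_{t=0}^{n} (-1)^{t + p·binom(t,2)} q^{t(n-1)} [n; t]_{q,p} equals 0 in ℚ(q). -/

import Mathlib

open scoped BigOperators

/-- The indeterminate `q` in the field of rational functions `ℚ(q)`. -/
noncomputable def qq : RatFunc ℚ := RatFunc.X

/-- The super quantum integer `[m]_{Q,p}`. -/
noncomputable def sqInt (p : ℕ) (Q : RatFunc ℚ) (m : ℕ) : RatFunc ℚ :=
  (((-1) ^ p * Q) ^ m - Q⁻¹ ^ m) / ((-1) ^ p * Q - Q⁻¹)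

/-- The super quantum factorial `[n]!_{Q,p}`. -/
noncomputable def sqFact (p : ℕ) (Q : RatFunc ℚ) (n : ℕ) : RatFunc ℚ :=
  ∏ s ∈ Finset.range n, sqInt p Q (s + 1)

/-- The super quantum binomial coefficient `[n; t]_{Q,p} = [n]!/([t]![n-t]!)`. -/
noncomputable def sqBinomN (p : ℕ) (Q : RatFunc ℚ) (n t : ℕ) : RatFunc ℚ :=
  sqFact p Q n / (sqFact p Q t * sqFact p Q (n - t))


/-!
Put `Q = (-1) ^ p * q ^ 2`. Each super quantum integer is a rescaled `Q`-integer,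
`[m + 1]_{q,p} = q ^ (-m) * (1 + Q + ⋯ + Q ^ m)`, so `[n; t]_{q,p}` is `q ^ (-t (n - t))` times
the Gaussian binomial coefficient `[n; t]_Q`, and the powers of `q` in the sum collapse to
`Q ^ binom(t, 2)`. The resulting sum `∑ (-1) ^ t Q ^ binom(t, 2) [n; t]_Q` telescopes to `0` by
the `Q`-Pascal rule. The divisions are harmless since `Q` is transcendental, so no `Q`-integer
vanishes.
-/

open Finset

lemma Nat.add_choose_two (a b : ℕ) : (a + b).choose 2 = a.choose 2 + b.choose 2 + a * b := by
  induction b with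
  | zero => simp
  | succ b ih =>
    rw [← add_assoc, Nat.choose_succ_succ', Nat.choose_succ_succ' b, ih, Nat.choose_one_right,
      Nat.choose_one_right]
    ring

lemma Nat.two_mul_choose_two_add_mul_sub {t n : ℕ} (h : t ≤ n) :
    2 * t.choose 2 + t * (n - t) = t * (n - 1) := by
  rw [mul_comm 2, Nat.choose_succ_right_eq t 1, Nat.choose_one_right, ← Nat.mul_add]
  rcases t with _ | t
  · simp
  · congr 1
    omega

section QAnalogues

variable {R : Type*} [CommRing R]

def qInt (Q : R) (m : ℕ) : R := ∑ i ∈ range m, Q ^ i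

def qFactorial (Q : R) (n : ℕ) : R := ∏ s ∈ range n, qInt Q (s + 1)

def gaussBinom (Q : R) : ℕ → ℕ → R
  | _, 0 => 1
  | 0, _ + 1 => 0
  | n + 1, k + 1 => gaussBinom Q n k + Q ^ (k + 1) * gaussBinom Q n (k + 1)

variable (Q : R)

@[simp]
lemma gaussBinom_zero_right (n : ℕ) : gaussBinom Q n 0 = 1 := by
  cases n <;> rfl

lemma gaussBinom_succ_succ (n k : ℕ) :
    gaussBinom Q (n + 1) (k + 1) = gaussBinom Q n k + Q ^ (k + 1) * gaussBinom Q n (k + 1) :=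
  rfl

lemma gaussBinom_eq_zero_of_lt : ∀ {n k : ℕ}, n < k → gaussBinom Q n k = 0
  | 0, _ + 1, _ => rfl
  | n + 1, k + 1, h => by
    rw [gaussBinom_succ_succ, gaussBinom_eq_zero_of_lt (by omega),
      gaussBinom_eq_zero_of_lt (by omega), mul_zero, add_zero]

lemma qInt_add (a b : ℕ) : qInt Q (a + b) = qInt Q a + Q ^ a * qInt Q b := by
  simp only [qInt, sum_range_add, pow_add, mul_sum]

@[simp]
lemma qFactorial_zero : qFactorial Q 0 = 1 := prod_range_zero _

lemma qFactorial_succ (n : ℕ) : qFactorial Q (n + 1) = qFactorial Q n * qInt Q (n + 1) :=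
  prod_range_succ _ _

@[simp]
lemma gaussBinom_self : ∀ n : ℕ, gaussBinom Q n n = 1
  | 0 => rfl
  | n + 1 => by
    rw [gaussBinom_succ_succ, gaussBinom_self n, gaussBinom_eq_zero_of_lt Q n.lt_succ_self,
      mul_zero, add_zero]

theorem gaussBinom_add_mul_qFactorial_mul_qFactorial : ∀ k s : ℕ,
    gaussBinom Q (k + s) k * qFactorial Q k * qFactorial Q s = qFactorial Q (k + s)
  | k, 0 => by simp
  | 0, s => by simp
  | k + 1, s + 1 => by
    have ih₁ := gaussBinom_add_mul_qFactorial_mul_qFactorial k (s + 1)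
    have ih₂ := gaussBinom_add_mul_qFactorial_mul_qFactorial (k + 1) s
    rw [show k + (s + 1) = k + 1 + s by omega] at ih₁
    rw [show k + 1 + (s + 1) = k + 1 + s + 1 by omega, gaussBinom_succ_succ,
      qFactorial_succ Q (k + 1 + s), show k + 1 + s + 1 = k + 1 + (s + 1) by omega,
      qInt_add Q (k + 1) (s + 1)]
    linear_combination qInt Q (k + 1) * ih₁ + Q ^ (k + 1) * qInt Q (s + 1) * ih₂ +
      gaussBinom Q (k + 1 + s) k * qFactorial Q (s + 1) * qFactorial_succ Q k +
      Q ^ (k + 1) * gaussBinom Q (k + 1 + s) (k + 1) * qFactorial Q (k + 1) * qFactorial_succ Q s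

/-- Pascal's rule makes the summand at `t + 1` the difference `f (t + 1) - f t`
with `f j = (-1) ^ j * Q ^ (j + 1).choose 2 * gaussBinom Q (n - 1) j`. -/
theorem alternating_sum_gaussBinom_eq_zero {n : ℕ} (hn : n ≠ 0) :
    ∑ t ∈ range (n + 1), (-1) ^ t * Q ^ t.choose 2 * gaussBinom Q n t = 0 := by
  obtain ⟨m, rfl⟩ := Nat.exists_eq_succ_of_ne_zero hn
  set f : ℕ → R := fun j => (-1) ^ j * Q ^ (j + 1).choose 2 * gaussBinom Q m j
  have telescope : ∀ t ∈ range (m + 1),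
      (-1) ^ (t + 1) * Q ^ (t + 1).choose 2 * gaussBinom Q (m + 1) (t + 1) = f (t + 1) - f t := by
    intro t _
    simp only [f, gaussBinom_succ_succ, Nat.choose_succ_succ' (t + 1) 1, Nat.choose_one_right,
      pow_add]
    ring
  rw [sum_range_succ', sum_congr rfl telescope, sum_range_sub]
  simp [f, gaussBinom_eq_zero_of_lt Q m.lt_succ_self]

end QAnalogues

section Field

variable {K : Type*} [Field K]

lemma qInt_ne_zero {Q : K} {m : ℕ} (h : Q ^ m ≠ 1) : qInt Q m ≠ 0 := fun h₀ =>
  h <| sub_eq_zero.mp <| by rw [← geom_sum_mul, ← qInt, h₀, zero_mul]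

lemma qFactorial_ne_zero {Q : K} (hQ : ¬IsOfFinOrder Q) (n : ℕ) : qFactorial Q n ≠ 0 :=
  prod_ne_zero_iff.mpr fun s _ =>
    qInt_ne_zero fun h => hQ (isOfFinOrder_iff_pow_eq_one.mpr ⟨s + 1, s.succ_pos, h⟩)

lemma pow_succ_sub_pow_succ_div_sub {a b : K} (hb : b ≠ 0) (hab : a ≠ b) (m : ℕ) :
    (a ^ (m + 1) - b ^ (m + 1)) / (a - b) = b ^ m * qInt (a / b) (m + 1) := by
  have hab' : a / b ≠ 1 := div_ne_one_of_ne hab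
  rw [qInt, geom_sum_eq hab', div_pow]
  field_simp
  ring

end Field

section SuperQuantum

variable (p : ℕ) {Q : RatFunc ℚ}

lemma sqInt_succ (hQ : Q ≠ 0) (hQ₂ : (-1) ^ p * Q ^ 2 ≠ 1) (m : ℕ) :
    sqInt p Q (m + 1) = Q⁻¹ ^ m * qInt ((-1) ^ p * Q ^ 2) (m + 1) := by
  have hne : (-1) ^ p * Q ≠ Q⁻¹ := fun h => hQ₂ <| by
    rw [pow_two, ← mul_assoc, h, inv_mul_cancel₀ hQ]
  rw [sqInt, pow_succ_sub_pow_succ_div_sub (inv_ne_zero hQ) hne, div_inv_eq_mul, mul_assoc,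
    ← pow_two]

lemma sqFact_eq (hQ : Q ≠ 0) (hQ₂ : (-1) ^ p * Q ^ 2 ≠ 1) (n : ℕ) :
    sqFact p Q n = Q⁻¹ ^ n.choose 2 * qFactorial ((-1) ^ p * Q ^ 2) n := by
  rw [sqFact, qFactorial, Nat.choose_two_right, ← sum_range_id, ← prod_pow_eq_pow_sum,
    ← prod_mul_distrib]
  exact prod_congr rfl fun m _ => sqInt_succ p hQ hQ₂ m

lemma sqBinomN_eq (hQ : Q ≠ 0) (hQ₂ : ¬IsOfFinOrder ((-1) ^ p * Q ^ 2)) {n t : ℕ}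
    (h : t ≤ n) :
    sqBinomN p Q n t = Q⁻¹ ^ (t * (n - t)) * gaussBinom ((-1) ^ p * Q ^ 2) n t := by
  obtain ⟨s, rfl⟩ := Nat.exists_eq_add_of_le h
  have hne : (-1) ^ p * Q ^ 2 ≠ 1 := fun h₁ => hQ₂ (by rw [h₁]; exact IsOfFinOrder.one)
  have ht := qFactorial_ne_zero hQ₂ t
  have hs := qFactorial_ne_zero hQ₂ s
  rw [sqBinomN, Nat.add_sub_cancel_left, sqFact_eq p hQ hne, sqFact_eq p hQ hne,
    sqFact_eq p hQ hne, ← gaussBinom_add_mul_qFactorial_mul_qFactorial, Nat.add_choose_two,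
    pow_add, pow_add,
    div_eq_iff (by simp [ht, hs, hQ])]
  ring

end SuperQuantum

lemma Transcendental.not_isOfFinOrder {R A : Type*} [CommRing R] [Nontrivial R] [Ring A]
    [Algebra R A] {x : A} (hx : Transcendental R x) : ¬IsOfFinOrder x := fun hfin => by
  obtain ⟨m, hm, hxm⟩ := isOfFinOrder_iff_pow_eq_one.mp hfin
  exact hx.pow hm (hxm ▸ isAlgebraic_one)

lemma transcendental_qq : Transcendental ℚ qq := by
  rw [qq, ← RatFunc.algebraMap_X, transcendental_algebraMap_iff (IsFractionRing.injective _ _)]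
  exact Polynomial.transcendental_X ℚ

/-- The square of `(-1) ^ p * qq ^ 2` is `qq ^ 4`, which is transcendental. -/
lemma not_isOfFinOrder_neg_one_pow_mul_qq_sq (p : ℕ) : ¬IsOfFinOrder ((-1) ^ p * qq ^ 2) :=
  fun hfin => (transcendental_qq.pow (n := 4) (by norm_num)).not_isOfFinOrder <| by
    convert hfin.pow (n := 2) using 1
    rw [mul_pow, ← pow_mul, ← pow_mul, mul_comm p, pow_mul, neg_one_sq, one_pow, one_mul]

theorem alternating_sum_sqBinom_eq_zero_general (p : ℕ) (n : ℕ) (hn : 1 ≤ n) :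
    ∑ t ∈ Finset.range (n + 1),
        (-1 : RatFunc ℚ) ^ (t + p * Nat.choose t 2) * qq ^ (t * (n - 1)) *
          sqBinomN p qq n t = 0 := by
  have hqq : qq ≠ 0 := RatFunc.X_ne_zero
  calc _ = ∑ t ∈ range (n + 1),
        (-1) ^ t * ((-1) ^ p * qq ^ 2) ^ t.choose 2 * gaussBinom ((-1) ^ p * qq ^ 2) n t := by
        refine sum_congr rfl fun t ht => ?_
        have htn : t ≤ n := Nat.lt_succ_iff.mp (mem_range.mp ht)
        rw [sqBinomN_eq p hqq (not_isOfFinOrder_neg_one_pow_mul_qq_sq p) htn,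
          ← Nat.two_mul_choose_two_add_mul_sub htn, pow_add, pow_add, pow_mul, pow_mul, mul_pow,
          inv_pow]
        field_simp
    _ = 0 := alternating_sum_gaussBinom_eq_zero _ (by omega)

/-- The alternating sum `∑_{t=0}^n (-1)^{t + p·C(t,2)} q^{t(n-1)} [n; t]_{q,p} = 0`
for `n ≥ 1`. -/
theorem alternating_sum_sqBinom_eq_zero (p : ℕ) (hp : p = 0 ∨ p = 1)
    (n : ℕ) (hn : 1 ≤ n) :
    ∑ t ∈ Finset.range (n + 1),
        (-1 : RatFunc ℚ) ^ (t + p * Nat.choose t 2) * qq ^ (t * (n - 1)) *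
          sqBinomN p qq n t = 0 :=
  alternating_sum_sqBinom_eq_zero_general p n hn
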